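/- arXiv:2302.07850 — 2 statements merged into one kernel-verified Lean document; each statement's English description precedes it below -/
import Mathlib

section
/- Let μ be a Borel probability measure on V_∞ = {0,1}^ℕ and let (X_n)_{n∈ℕ} be the random sequence of binary trees generated by the digital search tree (DST) algorithm from an i.i.d. input sequence (ξ_i)_{i∈ℕ} with distribution μ. Then, with probability one, for every u ∈ V the relative subtree size t(X_n, u) converges to μ(B_u) as n → ∞. -/
open MeasureTheory ProbabilityTheory Filter Topology
open scoped ENNReal NNReal

namespace DMTCS

/-- `V = {0,1}^*`: the set of finite binary words. -/
abbrev Word : Type := List Bool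

/-- `V_∞ = {0,1}^ℕ`: infinite binary sequences, with the product (Borel) σ-field. -/
abbrev BSeq : Type := ℕ → Bool

/-- The prefix of length `k` of an infinite sequence. -/
def prefixSeq (v : BSeq) (k : ℕ) : Word := List.ofFn (fun i : Fin k => v i)

/-- The cylinder set `B_u = {v ∈ V_∞ : u is a prefix of v}`. -/
def cyl (u : Word) : Set BSeq := {v | prefixSeq v u.length = u}

/-- A (finite) binary tree: a prefix-stable finite set of words. -/
def IsBinTree (x : Finset Word) : Prop := ∀ v ∈ x, v ≠ [] → v.dropLast ∈ x

/-- The number of nodes of the subtree of `x` rooted at `u`, i.e. `|{v : u+v ∈ x}|`. -/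
def subCard (x : Finset Word) (u : Word) : ℕ := (x.filter (fun w => u <+: w)).card

/-- The relative subtree size function `t(x,u)`. -/
noncomputable def stf (x : Finset Word) (u : Word) : ℝ := (subCard x u : ℝ) / (x.card : ℝ)

/-- The length at which the routing path of `v` first exits the tree `x`. -/
noncomputable def exitLen (x : Finset Word) (v : BSeq) : ℕ := sInf {k | prefixSeq v k ∉ x}

/-- The external node of `x` at which the routing path of `v` exits `x`. -/
noncomputable def exitNode (x : Finset Word) (v : BSeq) : Word := prefixSeq v (exitLen x v)

/-- The digital search tree (DST) algorithm: `dstSeq ξ 0 = {∅}` (the tree with one node,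
corresponding to `X_1`), and the next tree adjoins the external node where the routing
path of the next input exits the current tree; `dstSeq ξ n` has `n+1` nodes and
corresponds to `X_{n+1}`. -/
noncomputable def dstSeq (ξ : ℕ → BSeq) : ℕ → Finset Word
  | 0 => {([] : Word)}
  | n + 1 => insert (exitNode (dstSeq ξ n) (ξ n)) (dstSeq ξ n)

lemma prefixSeq_length (v : BSeq) (k : ℕ) : (prefixSeq v k).length = k := by
  simp [prefixSeq]

lemma prefixSeq_prefix (v : BSeq) {m k : ℕ} (h : m ≤ k) :
    prefixSeq v m <+: prefixSeq v k := by
  rw [List.prefix_iff_eq_take]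
  apply List.ext_getElem
  · simp [prefixSeq, h]
  · intro i h1 h2
    simp only [prefixSeq, prefixSeq_length] at h1 ⊢
    simp [List.getElem_take, List.getElem_ofFn]

lemma eq_of_prefix_prefixSeq {u : Word} {v : BSeq} {k : ℕ} (h : u <+: prefixSeq v k) :
    prefixSeq v u.length = u := by
  have hl : u.length ≤ k := by simpa [prefixSeq_length] using h.length_le
  have h2 : prefixSeq v u.length <+: prefixSeq v k := prefixSeq_prefix v hl
  have := List.prefix_of_prefix_length_le h2 h (by simp [prefixSeq_length])
  exact this.eq_of_length (by simp [prefixSeq_length])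

lemma exit_nonempty (x : Finset Word) (v : BSeq) : {k | prefixSeq v k ∉ x}.Nonempty := by
  refine ⟨(x.sup List.length) + 1, fun h => ?_⟩
  have := Finset.le_sup (f := List.length) h
  rw [prefixSeq_length] at this
  omega

lemma exitNode_not_mem (x : Finset Word) (v : BSeq) : exitNode x v ∉ x :=
  Nat.sInf_mem (exit_nonempty x v)

lemma mem_of_lt_exitLen {x : Finset Word} {v : BSeq} {k : ℕ} (h : k < exitLen x v) :
    prefixSeq v k ∈ x := not_not.1 (Nat.notMem_of_lt_sInf h)

lemma dstSeq_card (ξ : ℕ → BSeq) (n : ℕ) : (dstSeq ξ n).card = n + 1 := by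
  induction n with
  | zero => simp [dstSeq]
  | succ n ih =>
    rw [dstSeq, Finset.card_insert_of_notMem (exitNode_not_mem _ _), ih]

lemma dstSeq_mono (ξ : ℕ → BSeq) : Monotone (dstSeq ξ) := by
  apply monotone_nat_of_le_succ
  intro n
  rw [dstSeq]
  exact Finset.subset_insert _ _

lemma subCard_eq (ξ : ℕ → BSeq) (u : Word) (n : ℕ) :
    subCard (dstSeq ξ n) u =
      (if u = [] then 1 else 0) +
        ((Finset.range n).filter (fun i => u <+: exitNode (dstSeq ξ i) (ξ i))).card := by
  induction n with
  | zero =>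
    simp only [dstSeq, subCard, Finset.range_zero, Finset.filter_empty, Finset.card_empty,
      add_zero, Finset.filter_singleton]
    by_cases h : u = []
    · simp [h]
    · simp [h, List.prefix_nil]
  | succ n ih =>
    rw [dstSeq, subCard, Finset.filter_insert, Finset.range_add_one, Finset.filter_insert]
    by_cases h : u <+: exitNode (dstSeq ξ n) (ξ n)
    · rw [if_pos h, if_pos h, Finset.card_insert_of_notMem, Finset.card_insert_of_notMem]
      · rw [← subCard, ih]; ring
      · simp
      · intro hmem
        exact exitNode_not_mem (dstSeq ξ n) (ξ n) (Finset.mem_filter.1 hmem).1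
    · rw [if_neg h, if_neg h, ← subCard, ih]



lemma prefix_eq_of_length {u a b : Word} (ha : a <+: u) (hb : b <+: u)
    (h : a.length = b.length) : a = b :=
  (List.prefix_of_prefix_length_le ha hb h.le).eq_of_length h

lemma exitLen_lt_of_not_prefix {ξ : ℕ → BSeq} {u : Word} {i : ℕ}
    (hc : ξ i ∈ cyl u) (hb : ¬ u <+: exitNode (dstSeq ξ i) (ξ i)) :
    exitLen (dstSeq ξ i) (ξ i) < u.length := by
  by_contra hle
  push_neg at hle
  exact hb (hc ▸ prefixSeq_prefix (ξ i) hle)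

lemma exitNode_prefix_of_cyl {ξ : ℕ → BSeq} {u : Word} {i : ℕ}
    (hc : ξ i ∈ cyl u) (hlt : exitLen (dstSeq ξ i) (ξ i) ≤ u.length) :
    exitNode (dstSeq ξ i) (ξ i) <+: u :=
  hc ▸ prefixSeq_prefix (ξ i) hlt

open scoped Classical in
lemma card_filter_cyl_le (ξ : ℕ → BSeq) (u : Word) (n : ℕ) :
    ((Finset.range n).filter (fun i => ξ i ∈ cyl u)).card ≤
      ((Finset.range n).filter (fun i => u <+: exitNode (dstSeq ξ i) (ξ i))).card + u.length := by
  classical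
  set B := (Finset.range n).filter (fun i => u <+: exitNode (dstSeq ξ i) (ξ i)) with hB
  set C := (Finset.range n).filter (fun i => ξ i ∈ cyl u) with hC
  have hBC : B ⊆ C := by
    intro i hi
    rw [hB, Finset.mem_filter] at hi
    rw [hC, Finset.mem_filter]
    exact ⟨hi.1, eq_of_prefix_prefixSeq hi.2⟩
  have hcard : (C \ B).card + B.card = C.card := Finset.card_sdiff_add_card_eq_card hBC
  have hkey : (C \ B).card ≤ u.length := by
    have := Finset.card_le_card_of_injOn (s := C \ B) (fun i => exitLen (dstSeq ξ i) (ξ i))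
      (t := Finset.range u.length) ?_ ?_
    · simpa using this
    · intro i hi
      rw [Finset.mem_coe, Finset.mem_sdiff, hB, hC, Finset.mem_filter, Finset.mem_filter] at hi
      exact Finset.mem_range.2
        (exitLen_lt_of_not_prefix hi.1.2 (fun h => hi.2 ⟨hi.1.1, h⟩))
    · intro i hi j hj hij
      by_contra hne
      simp only [Finset.mem_coe, Finset.mem_sdiff, hB, hC, Finset.mem_filter, not_and] at hi hj
      have hi2 : ¬ u <+: exitNode (dstSeq ξ i) (ξ i) := hi.2 hi.1.1
      have hj2 : ¬ u <+: exitNode (dstSeq ξ j) (ξ j) := hj.2 hj.1.1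
      have hli := exitLen_lt_of_not_prefix hi.1.2 hi2
      have hlj := exitLen_lt_of_not_prefix hj.1.2 hj2
      have heq : exitNode (dstSeq ξ i) (ξ i) = exitNode (dstSeq ξ j) (ξ j) := by
        apply prefix_eq_of_length (exitNode_prefix_of_cyl hi.1.2 hli.le)
          (exitNode_prefix_of_cyl hj.1.2 hlj.le)
        simpa [exitNode, prefixSeq_length] using hij
      have hmem : ∀ a b : ℕ, a < b →
          exitNode (dstSeq ξ a) (ξ a) ∈ dstSeq ξ b := by
        intro a b hab
        exact dstSeq_mono ξ hab (by rw [dstSeq]; exact Finset.mem_insert_self _ _)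
      rcases lt_or_gt_of_ne hne with h | h
      · exact exitNode_not_mem (dstSeq ξ j) (ξ j) (heq ▸ hmem i j h)
      · exact exitNode_not_mem (dstSeq ξ i) (ξ i) (heq.symm ▸ hmem j i h)
  omega



open scoped Classical in
lemma stf_tendsto_of_freq {ξ : ℕ → BSeq} {u : Word} {c : ℝ}
    (h : Tendsto (fun n => (((Finset.range n).filter (fun i => ξ i ∈ cyl u)).card : ℝ) / n)
      atTop (𝓝 c)) :
    Tendsto (fun n => stf (dstSeq ξ n) u) atTop (𝓝 c) := by
  set a : ℕ → ℝ := fun n => (((Finset.range n).filter (fun i => ξ i ∈ cyl u)).card : ℝ) with ha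
  have key : ∀ n, |(subCard (dstSeq ξ n) u : ℝ) - a n| ≤ (u.length : ℝ) + 1 := by
    intro n
    have h1 := card_filter_cyl_le ξ u n
    have h2 : ((Finset.range n).filter (fun i => u <+: exitNode (dstSeq ξ i) (ξ i))).card ≤
        ((Finset.range n).filter (fun i => ξ i ∈ cyl u)).card := by
      apply Finset.card_le_card
      intro i hi
      rw [Finset.mem_filter] at hi ⊢
      exact ⟨hi.1, eq_of_prefix_prefixSeq hi.2⟩
    have h3 := subCard_eq ξ u n
    have hub : subCard (dstSeq ξ n) u ≤ ((Finset.range n).filter (fun i => ξ i ∈ cyl u)).card + 1 := by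
      rw [h3]; split_ifs <;> omega
    have hlb : ((Finset.range n).filter (fun i => ξ i ∈ cyl u)).card ≤
        subCard (dstSeq ξ n) u + u.length := by
      rw [h3]; split_ifs <;> omega
    rw [abs_sub_le_iff]
    have c1 := (Nat.cast_le (α := ℝ)).2 hub
    have c2 := (Nat.cast_le (α := ℝ)).2 hlb
    push_cast at c1 c2
    constructor <;> [linarith; linarith]
  have decomp : ∀ n : ℕ, stf (dstSeq ξ n) u =
      a n / ((n : ℝ) + 1) + ((subCard (dstSeq ξ n) u : ℝ) - a n) / ((n : ℝ) + 1) := by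
    intro n
    have hcard : ((dstSeq ξ n).card : ℝ) = (n : ℝ) + 1 := by rw [dstSeq_card]; push_cast; ring
    rw [stf, hcard]
    ring
  have t1 : Tendsto (fun n : ℕ => a n / ((n : ℝ) + 1)) atTop (𝓝 c) := by
    have heq : ∀ n : ℕ, a n / ((n : ℝ) + 1) = (a n / n) * ((n : ℝ) / ((n : ℝ) + 1)) := by
      intro n
      rcases Nat.eq_zero_or_pos n with h0 | h0
      · subst h0; simp [ha]
      · have : (n : ℝ) ≠ 0 := Nat.cast_ne_zero.2 h0.ne'
        field_simp
    simp only [heq]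
    have := h.mul (tendsto_natCast_div_add_atTop (1 : ℝ))
    simpa using this
  have t2 : Tendsto (fun n : ℕ => ((subCard (dstSeq ξ n) u : ℝ) - a n) / ((n : ℝ) + 1))
      atTop (𝓝 0) := by
    apply squeeze_zero_norm (a := fun n : ℕ => ((u.length : ℝ) + 1) / ((n : ℝ) + 1))
    · intro n
      rw [Real.norm_eq_abs, abs_div, abs_of_pos (by positivity : (0 : ℝ) < (n : ℝ) + 1)]
      gcongr
      exact key n
    · have h0 := (tendsto_const_div_atTop_nhds_zero_nat ((u.length : ℝ) + 1)).comp
        (tendsto_add_atTop_nat 1)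
      refine h0.congr (fun n => ?_)
      simp only [Function.comp]
      push_cast
      ring_nf
  have := t1.add t2
  rw [add_zero] at this
  exact this.congr (fun n => (decomp n).symm)



lemma measurableSet_cyl (u : Word) : MeasurableSet (cyl u) := by
  have heq : cyl u =
      (fun v : BSeq => (fun i : Fin u.length => v i)) ⁻¹' {fun i : Fin u.length => u.get i} := by
    ext v
    simp only [cyl, Set.mem_setOf_eq, Set.mem_preimage, Set.mem_singleton_iff]
    constructor
    · intro h
      apply List.ofFn_injective
      show List.ofFn (fun i : Fin u.length => v i) = List.ofFn (fun i => u.get i)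
      rw [show List.ofFn (fun i : Fin u.length => u.get i) = u from List.ofFn_get u]
      exact h
    · intro h
      show List.ofFn (fun i : Fin u.length => v i) = u
      rw [h]
      exact List.ofFn_get u
  rw [heq]
  exact (measurable_pi_lambda (fun v : BSeq => fun i : Fin u.length => v i)
    (fun i => measurable_pi_apply (i : ℕ)))
    (measurableSet_singleton (fun i : Fin u.length => u.get i))


/-- For `(X_n) ~ DST(μ)` (generated from i.i.d. inputs with distribution `μ`), with
probability one `t(X_n,u) → μ(B_u)` for every `u ∈ V`. -/
theorem stmt2 {Ω : Type*} [MeasurableSpace Ω] (P : Measure Ω) [IsProbabilityMeasure P]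
    (μ : Measure BSeq) [IsProbabilityMeasure μ]
    (ξ : ℕ → Ω → BSeq) (hmeas : ∀ i, Measurable (ξ i))
    (hindep : iIndepFun ξ P)
    (hdist : ∀ i, Measure.map (ξ i) P = μ) :
    ∀ᵐ ω ∂P, ∀ u : Word,
      Tendsto (fun n => stf (dstSeq (fun j => ξ j ω) n) u) atTop (𝓝 ((μ (cyl u)).toReal)) := by
  classical
  rw [ae_all_iff]
  intro u
  set g : BSeq → ℝ := fun v => if v ∈ cyl u then 1 else 0 with hg
  have hgmeas : Measurable g :=
    Measurable.ite (measurableSet_cyl u) measurable_const measurable_const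
  set Y : ℕ → Ω → ℝ := fun i ω => g (ξ i ω) with hY
  have hYind : Y 0 = Set.indicator (ξ 0 ⁻¹' cyl u) (fun _ => (1 : ℝ)) := by
    funext ω
    simp [hY, hg, Set.indicator_apply, Set.mem_preimage]
  have hint : Integrable (Y 0) P := by
    rw [hYind]
    exact (integrable_const (1 : ℝ)).indicator ((hmeas 0) (measurableSet_cyl u))
  have hind : Pairwise (Function.onFun (IndepFun · · P) Y) := fun i j hij =>
    (hindep.comp (fun _ => g) (fun _ => hgmeas)).indepFun hij
  have hid : ∀ i, IdentDistrib (Y i) (Y 0) P P := by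
    intro i
    have hxi : IdentDistrib (ξ i) (ξ 0) P P :=
      ⟨(hmeas i).aemeasurable, (hmeas 0).aemeasurable, by rw [hdist i, hdist 0]⟩
    exact hxi.comp hgmeas
  have hE : ∫ ω, Y 0 ω ∂P = (μ (cyl u)).toReal := by
    rw [hYind]
    rw [show (fun _ : Ω => (1 : ℝ)) = (1 : Ω → ℝ) from rfl]
    rw [integral_indicator_one ((hmeas 0) (measurableSet_cyl u))]
    rw [← hdist 0, Measure.map_apply (hmeas 0) (measurableSet_cyl u), measureReal_def]
  have hslln := strong_law_ae_real Y hint hind hid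
  filter_upwards [hslln] with ω hω
  apply stf_tendsto_of_freq
  have hsum : ∀ n, (∑ i ∈ Finset.range n, Y i ω) =
      (((Finset.range n).filter (fun i => ξ i ω ∈ cyl u)).card : ℝ) := by
    intro n
    simp [hY, hg, Finset.sum_boole]
  have : (∫ ω, Y 0 ω ∂P) = (μ (cyl u)).toReal := hE
  rw [show P[Y 0] = (μ (cyl u)).toReal from hE] at hω
  refine hω.congr (fun n => ?_)
  rw [hsum n]


end DMTCS
end

section
/- Let (x_n)_{n∈ℕ} be a sequence of binary trees with lim_{n→∞} |x_n| = ∞, and for each n let μ_{x_n} = (1/(|x_n|+1)) Σ_{v∈∂x_n} unif(B_v) be the associated probability measure on V_∞. Then t(x_n, u) converges for every u ∈ V (subtree size convergence) if and only if (μ_{x_n})_{n∈ℕ} converges weakly on V_∞; and in that case, if μ is the weak limit, then lim_{n→∞} t(x_n,u) = μ(B_u) for all u ∈ V. -/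
open MeasureTheory ProbabilityTheory Filter Topology
open scoped ENNReal NNReal

namespace DMTCS

/-- The external boundary `∂x`: all `v ∉ x` of the form `u0` or `u1` with `u ∈ x`,
together with the root for the empty tree (so `∂∅ = {∅}`; for a nonempty
prefix-stable `x` the root belongs to `x` and is removed again). -/
def boundary (x : Finset Word) : Finset Word :=
  (insert ([] : Word)
    ((x.image (fun u => u ++ [false])) ∪ (x.image (fun u => u ++ [true])))) \ x

/-- The distribution `unif(B_v)` of `(v_1,...,v_k,ξ_1,ξ_2,...)` with `ξ_i` i.i.d. fair coins
is characterized by its cylinder values: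
`ν_v(B_w) = 2^{-(|w|-|v|)}` if `v ⪯ w`, `= 1` if `w ⪯ v`, and `= 0` otherwise. -/
def IsUnifCylFamily (ν : Word → Measure BSeq) : Prop :=
  (∀ v : Word, IsProbabilityMeasure (ν v)) ∧
    ∀ v w : Word, ν v (cyl w) =
      if v <+: w then (2 : ℝ≥0∞)⁻¹ ^ (w.length - v.length)
      else if w <+: v then 1 else 0

/-- The measure `μ_x = (1/(|x|+1)) Σ_{v ∈ ∂x} unif(B_v)` associated with a tree `x`. -/
noncomputable def treeMeasure (ν : Word → Measure BSeq) (x : Finset Word) : Measure BSeq :=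
  ((x.card : ℝ≥0∞) + 1)⁻¹ • ∑ v ∈ boundary x, ν v

/-- Weak convergence of Borel measures on `V_∞`: convergence of integrals of all
bounded continuous real functions. -/
def WeakTendsto (μs : ℕ → Measure BSeq) (μ : Measure BSeq) : Prop :=
  ∀ f : BoundedContinuousFunction BSeq ℝ,
    Tendsto (fun n => ∫ v, f v ∂(μs n)) atTop (𝓝 (∫ v, f v ∂μ))

lemma prefixSeq_succ (v : BSeq) (k : ℕ) :
    prefixSeq v (k+1) = prefixSeq v k ++ [v k] := by
  rw [prefixSeq, List.ofFn_succ']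
  simp [prefixSeq, List.concat_eq_append]

lemma prefixSeq_take (v : BSeq) {j k : ℕ} (h : j ≤ k) :
    (prefixSeq v k).take j = prefixSeq v j := by
  apply List.ext_getElem
  · simp [prefixSeq, h]
  · intro i h1 h2
    simp [prefixSeq]

lemma mem_cyl {u : Word} {v : BSeq} : v ∈ cyl u ↔ prefixSeq v u.length = u := Iff.rfl

lemma mem_cyl_iff_forall {u : Word} {v : BSeq} :
    v ∈ cyl u ↔ ∀ i : ℕ, (hi : i < u.length) → v i = u.get ⟨i, hi⟩ := by
  rw [mem_cyl, List.ext_get_iff]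
  simp [prefixSeq, List.get_ofFn]

lemma cyl_nil : cyl ([] : Word) = Set.univ := by
  ext v; simp [mem_cyl, prefixSeq]

lemma cyl_anti {u w : Word} (h : u <+: w) : cyl w ⊆ cyl u := by
  intro v hv
  rw [mem_cyl] at hv ⊢
  have h2 : (prefixSeq v w.length).take u.length = w.take u.length := by rw [hv]
  rw [prefixSeq_take v h.length_le] at h2
  rw [h2]
  exact (List.prefix_iff_eq_take.1 h).symm

lemma isClopen_cyl (u : Word) : IsClopen (cyl u) := by
  have : cyl u = ⋂ i : Fin u.length, (fun v : BSeq => v i) ⁻¹' {u.get i} := by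
    ext v
    simp only [Set.mem_iInter, Set.mem_preimage, Set.mem_singleton_iff, mem_cyl_iff_forall]
    exact ⟨fun h i => h i i.2, fun h i hi => h ⟨i, hi⟩⟩
  rw [this]
  constructor
  · exact isClosed_iInter fun i => (isClosed_discrete _).preimage (continuous_apply (i : ℕ))
  · exact isOpen_iInter_of_finite fun i => (isOpen_discrete _).preimage (continuous_apply (i : ℕ))

lemma mem_cyl_concat {u : Word} {b : Bool} {v : BSeq} :
    v ∈ cyl (u ++ [b]) ↔ v ∈ cyl u ∧ v u.length = b := by
  rw [mem_cyl, mem_cyl, List.length_append, List.length_singleton, prefixSeq_succ]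
  constructor
  · intro h
    obtain ⟨h1, h2⟩ := List.append_inj' h rfl
    exact ⟨h1, by injection h2⟩
  · rintro ⟨h1, h2⟩; rw [h1, h2]

lemma cyl_eq_union (u : Word) : cyl u = cyl (u ++ [false]) ∪ cyl (u ++ [true]) := by
  ext v
  simp only [Set.mem_union, mem_cyl_concat]
  constructor
  · intro h
    cases hb : v u.length
    · exact Or.inl ⟨h, rfl⟩
    · exact Or.inr ⟨h, rfl⟩
  · rintro (⟨h, _⟩ | ⟨h, _⟩) <;> exact h

lemma disjoint_cyl (u : Word) : Disjoint (cyl (u ++ [false])) (cyl (u ++ [true])) := by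
  rw [Set.disjoint_left]
  intro v h1 h2
  rw [mem_cyl_concat] at h1 h2
  rw [h1.2] at h2
  exact Bool.noConfusion h2.2



lemma prefix_dropLast {u w : Word} (h : u <+: w) (hne : u ≠ w) : u <+: w.dropLast := by
  rcases h with ⟨t, rfl⟩
  rcases List.eq_nil_or_concat t with rfl | ⟨t', b, rfl⟩
  · simp at hne
  · rw [List.concat_eq_append, ← List.append_assoc, List.dropLast_concat]
    exact ⟨t', rfl⟩

lemma IsBinTree.prefix_mem {x : Finset Word} (hx : IsBinTree x) :
    ∀ {w : Word}, w ∈ x → ∀ {u : Word}, u <+: w → u ∈ x := by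
  intro w
  induction w using List.reverseRecOn with
  | nil =>
    intro hw u hu
    rwa [List.prefix_nil.1 hu]
  | append_singleton w b ih =>
    intro hw u hu
    by_cases he : u = w ++ [b]
    · rwa [he]
    · have hw' : w ∈ x := by
        have := hx _ hw (by simp)
        rwa [List.dropLast_concat] at this
      exact ih hw' (by simpa [List.dropLast_concat] using prefix_dropLast hu he)

lemma mem_boundary {x : Finset Word} {v : Word} :
    v ∈ boundary x ↔ (v = [] ∨ ∃ u ∈ x, ∃ b : Bool, v = u ++ [b]) ∧ v ∉ x := by
  simp only [boundary, Finset.mem_sdiff, Finset.mem_insert, Finset.mem_union, Finset.mem_image]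
  constructor
  · rintro ⟨h, hv⟩
    refine ⟨?_, hv⟩
    rcases h with h | ⟨u, hu, hv'⟩ | ⟨u, hu, hv'⟩
    · exact Or.inl h
    · exact Or.inr ⟨u, hu, false, hv'.symm⟩
    · exact Or.inr ⟨u, hu, true, hv'.symm⟩
  · rintro ⟨h, hv⟩
    refine ⟨?_, hv⟩
    rcases h with h | ⟨u, hu, b, rfl⟩
    · exact Or.inl h
    · cases b
      · exact Or.inr (Or.inl ⟨u, hu, rfl⟩)
      · exact Or.inr (Or.inr ⟨u, hu, rfl⟩)

lemma boundary_card {x : Finset Word} (hx : IsBinTree x) :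
    (boundary x).card = x.card + 1 := by
  classical
  set S : Finset Word := insert ([] : Word)
    ((x.image (fun u => u ++ [false])) ∪ (x.image (fun u => u ++ [true]))) with hS
  have hsub : x ⊆ S := by
    intro v hv
    by_cases hv0 : v = []
    · rw [hv0, hS]; exact Finset.mem_insert_self _ _
    · have hd : v.dropLast ∈ x := hx v hv hv0
      have hrepr : v.dropLast ++ [v.getLast hv0] = v := List.dropLast_append_getLast hv0
      rw [hS]
      apply Finset.mem_insert_of_mem
      rw [Finset.mem_union]
      cases hb : v.getLast hv0
      · exact Or.inl (Finset.mem_image.2 ⟨v.dropLast, hd, by rw [← hb, hrepr]⟩)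
      · exact Or.inr (Finset.mem_image.2 ⟨v.dropLast, hd, by rw [← hb, hrepr]⟩)
  have hnil : ([] : Word) ∉ (x.image (fun u => u ++ [false])) ∪ (x.image (fun u => u ++ [true])) := by
    simp only [Finset.mem_union, Finset.mem_image, not_or, not_exists]
    constructor <;> · rintro u ⟨hu, h⟩; simp at h
  have hdisj : Disjoint (x.image (fun u => u ++ [false])) (x.image (fun u => u ++ [true])) := by
    rw [Finset.disjoint_left]
    rintro a ha hb
    obtain ⟨u1, _, h1⟩ := Finset.mem_image.1 ha
    obtain ⟨u2, _, h2⟩ := Finset.mem_image.1 hb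
    rw [← h2] at h1
    obtain ⟨-, h⟩ := List.append_inj' h1 rfl
    injection h with h
    exact Bool.noConfusion h
  have hcardS : S.card = 2 * x.card + 1 := by
    rw [hS, Finset.card_insert_of_notMem hnil, Finset.card_union_of_disjoint hdisj,
      Finset.card_image_of_injective _ (List.append_left_injective _),
      Finset.card_image_of_injective _ (List.append_left_injective _)]
    ring
  have : boundary x = S \ x := rfl
  rw [this, Finset.card_sdiff_of_subset hsub, hcardS]
  omega

lemma boundary_antichain {x : Finset Word} (hx : IsBinTree x) {v w : Word}
    (hv : v ∈ boundary x) (hw : w ∈ boundary x) (h : v <+: w) : v = w := by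
  by_contra hne
  obtain ⟨hform, hwx⟩ := mem_boundary.1 hw
  rcases hform with rfl | ⟨s, hs, b, rfl⟩
  · exact hne (List.prefix_nil.1 h)
  · have hvd : v <+: s := by
      simpa [List.dropLast_concat] using prefix_dropLast h hne
    exact (mem_boundary.1 hv).2 (hx.prefix_mem hs hvd)

lemma subCard_le_card (x : Finset Word) (u : Word) : subCard x u ≤ x.card :=
  Finset.card_filter_le _ _

lemma subCard_eq_zero {x : Finset Word} (hx : IsBinTree x) {u : Word} (hu : u ∉ x) :
    subCard x u = 0 := by
  rw [subCard, Finset.card_eq_zero, Finset.filter_eq_empty_iff]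
  exact fun {w} hw hp => hu (hx.prefix_mem hw hp)

lemma boundary_filter_card {x : Finset Word} (hx : IsBinTree x) {u : Word} (hu : u ∈ x) :
    ((boundary x).filter (fun v => u <+: v)).card = subCard x u + 1 := by
  classical
  set S : Finset Word := (x.filter (fun w => u <+: w)).image (fun w => w.drop u.length) with hS
  have hmemS : ∀ s : Word, s ∈ S ↔ u ++ s ∈ x := by
    intro s
    simp only [hS, Finset.mem_image, Finset.mem_filter]
    constructor
    · rintro ⟨w, ⟨hw, hp⟩, rfl⟩
      obtain ⟨t, rfl⟩ := hp
      rwa [List.drop_left]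
    · intro h
      exact ⟨u ++ s, ⟨h, ⟨s, rfl⟩⟩, List.drop_left⟩
  have hdrop : ∀ (s : Word), s ≠ [] → (u ++ s).dropLast = u ++ s.dropLast := by
    intro s hs
    rcases List.eq_nil_or_concat s with rfl | ⟨s', b, rfl⟩
    · exact absurd rfl hs
    · rw [List.concat_eq_append, ← List.append_assoc, List.dropLast_concat, List.dropLast_concat]
  have htreeS : IsBinTree S := by
    intro s hs hs0
    rw [hmemS] at hs ⊢
    rw [← hdrop s hs0]
    exact hx _ hs (by simp [hs0])
  have hcardS : S.card = subCard x u := by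
    rw [hS, subCard]
    apply Finset.card_image_of_injOn
    intro w1 h1 w2 h2 he
    obtain ⟨t1, rfl⟩ := (Finset.mem_filter.1 (Finset.mem_coe.1 h1)).2
    obtain ⟨t2, rfl⟩ := (Finset.mem_filter.1 (Finset.mem_coe.1 h2)).2
    simp only [List.drop_left] at he
    rw [he]
  have himg : (boundary x).filter (fun v => u <+: v) = (boundary S).image (fun s => u ++ s) := by
    ext v
    simp only [Finset.mem_filter, Finset.mem_image]
    constructor
    · rintro ⟨hvb, t, rfl⟩
      refine ⟨t, ?_, rfl⟩
      obtain ⟨hform, hnx⟩ := mem_boundary.1 hvb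
      have htS : t ∉ S := fun h => hnx ((hmemS t).1 h)
      have ht0 : t ≠ [] := by
        rintro rfl
        exact hnx (by simpa using hu)
      have hvd : (u ++ t).dropLast ∈ x := by
        rcases hform with h0 | ⟨w, hw, b, hw'⟩
        · exact absurd h0 (by simp [ht0])
        · rw [hw', List.dropLast_concat]; exact hw
      rw [mem_boundary]
      refine ⟨Or.inr ⟨t.dropLast, ?_, t.getLast ht0, (List.dropLast_append_getLast ht0).symm⟩, htS⟩
      rw [hmemS, ← hdrop t ht0]
      exact hvd
    · rintro ⟨t, htb, rfl⟩
      obtain ⟨hform, htS⟩ := mem_boundary.1 htb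
      have ht0 : t ≠ [] := by
        rintro rfl
        exact htS ((hmemS []).2 (by simpa using hu))
      rcases hform with rfl | ⟨s, hs, b, rfl⟩
      · exact absurd rfl ht0
      refine ⟨?_, List.prefix_append u _⟩
      rw [mem_boundary]
      constructor
      · right
        refine ⟨u ++ s, (hmemS s).1 hs, b, ?_⟩
        rw [List.append_assoc]
      · intro h
        exact htS ((hmemS _).2 h)
  have hinj : Function.Injective (fun s : Word => u ++ s) :=
    fun a b h => List.append_cancel_left h
  rw [himg, Finset.card_image_of_injective _ hinj, boundary_card htreeS, hcardS]




section Measures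
variable {ν : Word → Measure BSeq}

lemma treeMeasure_apply (ν : Word → Measure BSeq) (x : Finset Word) (s : Set BSeq) :
    treeMeasure ν x s = ((x.card : ℝ≥0∞) + 1)⁻¹ * ∑ v ∈ boundary x, ν v s := by
  rw [treeMeasure, Measure.smul_apply, Measure.finset_sum_apply]
  rfl

lemma sum_boundary_mem (hν : IsUnifCylFamily ν) {x : Finset Word} (hx : IsBinTree x)
    {u : Word} (hu : u ∈ x) :
    ∑ v ∈ boundary x, ν v (cyl u) = (subCard x u : ℝ≥0∞) + 1 := by
  classical
  have hval : ∀ v ∈ boundary x, ν v (cyl u) = if u <+: v then 1 else 0 := by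
    intro v hv
    rw [hν.2 v u]
    have hvnu : ¬ v <+: u := fun h => ((mem_boundary.1 hv).2) (hx.prefix_mem hu h)
    rw [if_neg hvnu]
  rw [Finset.sum_congr rfl hval, Finset.sum_boole]
  rw [boundary_filter_card hx hu]
  push_cast
  ring

lemma term_le_one (hν : IsUnifCylFamily ν) (v u : Word) : ν v (cyl u) ≤ 1 := by
  rw [hν.2 v u]
  split
  · exact pow_le_one' (by simp) _
  split
  · exact le_refl _
  · exact zero_le_one

lemma sum_boundary_not_mem (hν : IsUnifCylFamily ν) {x : Finset Word} (hx : IsBinTree x)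
    {u : Word} (hu : u ∉ x) :
    ∑ v ∈ boundary x, ν v (cyl u) ≤ 1 := by
  classical
  have hprefix : ∀ c ∈ boundary x, ν c (cyl u) ≠ 0 → c <+: u := by
    intro c hc hne
    rw [hν.2 c u] at hne
    by_cases h1 : c <+: u
    · exact h1
    rw [if_neg h1] at hne
    by_cases h2 : u <+: c
    · exfalso
      have hcu : c ≠ u := fun h => h1 (h ▸ List.prefix_rfl)
      have hne2 : u ≠ c := fun h => hcu h.symm
      have hc0 : c ≠ [] := by
        rintro rfl
        exact hne2 (List.prefix_nil.1 h2)
      obtain ⟨hform, hcx⟩ := mem_boundary.1 hc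
      have hdl : c.dropLast ∈ x := by
        rcases hform with rfl | ⟨w, hw, b, rfl⟩
        · exact absurd rfl hc0
        · rw [List.dropLast_concat]; exact hw
      exact hu (hx.prefix_mem hdl (prefix_dropLast h2 hne2))
    · rw [if_neg h2] at hne
      exact absurd rfl hne
  have hcard : ((boundary x).filter (fun v => ν v (cyl u) ≠ 0)).card ≤ 1 := by
    rw [Finset.card_le_one]
    intro a ha b hb
    rw [Finset.mem_filter] at ha hb
    have hau := hprefix a ha.1 ha.2
    have hbu := hprefix b hb.1 hb.2
    rcases List.prefix_or_prefix_of_prefix hau hbu with h | h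
    · exact boundary_antichain hx ha.1 hb.1 h
    · exact (boundary_antichain hx hb.1 ha.1 h).symm
  calc ∑ v ∈ boundary x, ν v (cyl u)
      = ∑ v ∈ (boundary x).filter (fun v => ν v (cyl u) ≠ 0), ν v (cyl u) := by
        rw [Finset.sum_filter_ne_zero]
    _ ≤ ∑ v ∈ (boundary x).filter (fun v => ν v (cyl u) ≠ 0), 1 := by
        exact Finset.sum_le_sum (fun v _ => term_le_one hν v u)
    _ = (((boundary x).filter (fun v => ν v (cyl u) ≠ 0)).card : ℝ≥0∞) := by simp
    _ ≤ 1 := by exact_mod_cast hcard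

lemma treeMeasure_prob (hν : IsUnifCylFamily ν) {x : Finset Word} (hx : IsBinTree x) :
    IsProbabilityMeasure (treeMeasure ν x) := by
  constructor
  rw [treeMeasure_apply]
  have hval : ∀ v ∈ boundary x, ν v Set.univ = 1 := fun v _ => (hν.1 v).measure_univ
  rw [Finset.sum_congr rfl hval, Finset.sum_const, nsmul_eq_mul, mul_one, boundary_card hx]
  push_cast
  refine ENNReal.inv_mul_cancel (by simp) (by simp [ENNReal.add_eq_top])

lemma sum_boundary_bounds (hν : IsUnifCylFamily ν) {x : Finset Word} (hx : IsBinTree x)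
    (u : Word) :
    (subCard x u : ℝ≥0∞) ≤ ∑ v ∈ boundary x, ν v (cyl u) ∧
      ∑ v ∈ boundary x, ν v (cyl u) ≤ (subCard x u : ℝ≥0∞) + 1 := by
  by_cases hu : u ∈ x
  · rw [sum_boundary_mem hν hx hu]
    exact ⟨le_self_add, le_refl _⟩
  · rw [subCard_eq_zero hx hu]
    simpa using sum_boundary_not_mem hν hx hu

lemma abs_treeMeasure_sub_stf (hν : IsUnifCylFamily ν) {x : Finset Word} (hx : IsBinTree x)
    (hc : 1 ≤ x.card) (u : Word) :
    |(treeMeasure ν x (cyl u)).toReal - stf x u| ≤ 2 / (x.card : ℝ) := by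
  obtain ⟨hlo, hhi⟩ := sum_boundary_bounds hν hx u
  set T : ℝ≥0∞ := ∑ v ∈ boundary x, ν v (cyl u) with hT
  have hTtop : T ≠ ⊤ := ne_top_of_le_ne_top (by simp [ENNReal.add_eq_top]) hhi
  set s : ℝ := (subCard x u : ℝ) with hsdef
  set c : ℝ := (x.card : ℝ) with hcdef
  have hc0 : (1:ℝ) ≤ c := by rw [hcdef]; exact_mod_cast hc
  have hcpos : (0:ℝ) < c := lt_of_lt_of_le one_pos hc0
  have hsc : s ≤ c := by rw [hcdef, hsdef]; exact_mod_cast subCard_le_card x u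
  have hs0 : 0 ≤ s := by rw [hsdef]; positivity
  set r : ℝ := T.toReal with hr
  have hrlo : s ≤ r := by
    have := ENNReal.toReal_mono hTtop hlo
    simpa using this
  have hrhi : r ≤ s + 1 := by
    have := ENNReal.toReal_mono (by simp [ENNReal.add_eq_top]) hhi
    rw [ENNReal.toReal_add (by simp) (by simp)] at this
    simpa using this
  have hm : (treeMeasure ν x (cyl u)).toReal = r / (c + 1) := by
    rw [treeMeasure_apply, ← hT, ENNReal.toReal_mul, ENNReal.toReal_inv]
    rw [ENNReal.toReal_add (by simp) (by simp)]
    simp only [ENNReal.toReal_natCast, ENNReal.toReal_one]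
    rw [inv_mul_eq_div]
  have hstf : stf x u = s / c := rfl
  rw [hm, hstf]
  have hd1 : (0:ℝ) < c + 1 := by linarith
  have hd2 : (0:ℝ) < (c+1)*c := mul_pos hd1 hcpos
  have hkey : r / (c+1) - s / c = (r*c - s*(c+1)) / ((c+1)*c) := by
    field_simp
  rw [hkey, abs_div, abs_of_pos hd2]
  have hnum : |r*c - s*(c+1)| ≤ c := by
    rw [abs_le]
    constructor <;> nlinarith
  calc |r*c - s*(c+1)| / ((c+1)*c) ≤ c / ((c+1)*c) := by
        exact (div_le_div_iff_of_pos_right hd2).2 hnum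
    _ ≤ 2 / c := by
        rw [div_le_div_iff₀ hd2 hcpos]
        nlinarith

end Measures


section Construction

def off : Word → (Word → ℝ) → ℝ
  | [], _ => 0
  | b :: u, L => (if b = true then L [false] else 0) + off u (fun w => L (b :: w))

/-- `Good L`: nonnegative and additive cylinder weights. -/
def Good (L : Word → ℝ) : Prop :=
  (∀ u, 0 ≤ L u) ∧ ∀ u, L u = L (u ++ [false]) + L (u ++ [true])

lemma Good.cons {L : Word → ℝ} (hL : Good L) (b : Bool) : Good (fun w => L (b :: w)) := by
  refine ⟨fun u => hL.1 _, fun u => ?_⟩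
  simpa using hL.2 (b :: u)

lemma off_nonneg : ∀ (u : Word) (L : Word → ℝ), (∀ w, 0 ≤ L w) → 0 ≤ off u L := by
  intro u
  induction u with
  | nil => intro L hL; simp [off]
  | cons b u ih =>
    intro L hL
    have h1 : 0 ≤ (if b = true then L [false] else 0) := by
      split
      · exact hL _
      · exact le_refl _
    exact add_nonneg h1 (ih _ (fun w => hL _))

lemma off_add_le : ∀ (u : Word) (L : Word → ℝ), Good L → off u L + L u ≤ L [] := by
  intro u
  induction u with
  | nil => intro L hL; simp [off]
  | cons b u ih =>
    intro L hL
    have hroot : L [] = L [false] + L [true] := by simpa using hL.2 []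
    have h2 := ih (fun w => L (b :: w)) (hL.cons b)
    cases b
    · simp only [off, if_neg (Bool.false_ne_true), zero_add]
      calc off u (fun w => L (false :: w)) + L (false :: u) ≤ L [false] := h2
        _ ≤ L [] := by rw [hroot]; linarith [hL.1 [true]]
    · simp only [off, if_pos rfl]
      calc L [false] + off u (fun w => L (true :: w)) + L (true :: u)
          = L [false] + (off u (fun w => L (true :: w)) + L (true :: u)) := by ring
        _ ≤ L [false] + L [true] := by linarith
        _ = L [] := hroot.symm

lemma off_concat : ∀ (u : Word) (L : Word → ℝ), Good L → ∀ b : Bool,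
    off (u ++ [b]) L = off u L + (if b = true then L (u ++ [false]) else 0) := by
  intro u
  induction u with
  | nil =>
    intro L hL b
    cases b <;> simp [off]
  | cons c u ih =>
    intro L hL b
    have h := ih (fun w => L (c :: w)) (hL.cons c) b
    simp only [List.cons_append, List.append_eq, off] at *
    rw [h]
    ring

variable (L : Word → ℝ)

noncomputable def bitf (t : ℝ) (u : Word) : Bool :=
  if t < off u L + L (u ++ [false]) then false else true

noncomputable def wrd (t : ℝ) : ℕ → Word
  | 0 => []
  | n+1 => wrd t n ++ [bitf L t (wrd t n)]

noncomputable def limf (t : ℝ) : BSeq := fun n => bitf L t (wrd L t n)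

lemma wrd_eq_prefixSeq (t : ℝ) (n : ℕ) : wrd L t n = prefixSeq (limf L t) n := by
  induction n with
  | zero => simp [wrd, prefixSeq]
  | succ n ih => rw [wrd, prefixSeq_succ, ← ih]; rfl

lemma wrd_length (t : ℝ) (n : ℕ) : (wrd L t n).length = n := by
  rw [wrd_eq_prefixSeq, prefixSeq_length]

variable {L}

lemma wrd_mem_Ico (hL : Good L) {t : ℝ} (ht0 : 0 ≤ t) (ht1 : t < L []) (n : ℕ) :
    off (wrd L t n) L ≤ t ∧ t < off (wrd L t n) L + L (wrd L t n) := by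
  induction n with
  | zero => simpa [wrd, off] using ⟨ht0, ht1⟩
  | succ n ih =>
    by_cases hb : t < off (wrd L t n) L + L (wrd L t n ++ [false])
    · have hbit : bitf L t (wrd L t n) = false := if_pos hb
      rw [wrd, hbit, off_concat _ _ hL]
      simp only [if_neg (Bool.false_ne_true), add_zero]
      exact ⟨ih.1, hb⟩
    · have hbit : bitf L t (wrd L t n) = true := if_neg hb
      rw [wrd, hbit, off_concat _ _ hL]
      simp only [if_pos rfl, if_true]
      have hadd := hL.2 (wrd L t n)
      constructor
      · linarith [not_lt.1 hb]
      · linarith [ih.2]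

lemma wrd_eq_of_mem (hL : Good L) {t : ℝ} (ht0 : 0 ≤ t) (ht1 : t < L []) :
    ∀ u : Word, off u L ≤ t → t < off u L + L u → wrd L t u.length = u := by
  intro u
  induction u using List.reverseRecOn with
  | nil => simp [wrd]
  | append_singleton u b ihu =>
    intro h1 h2
    have hadd := hL.2 u
    have h0f := hL.1 (u ++ [false])
    have h0t := hL.1 (u ++ [true])
    have hcf := off_concat u L hL false
    have hct := off_concat u L hL true
    simp only [if_neg (Bool.false_ne_true), if_pos rfl, if_true, add_zero] at hcf hct
    have hu : wrd L t u.length = u := by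
      apply ihu
      · cases b
        · rwa [hcf] at h1
        · rw [hct] at h1; linarith
      · cases b
        · rw [hcf] at h2; linarith
        · rw [hct] at h2; linarith
    rw [List.length_append, List.length_singleton, wrd, hu]
    congr 1
    cases b
    · have : t < off u L + L (u ++ [false]) := by rwa [hcf] at h2
      simp [bitf, this]
    · have : ¬ t < off u L + L (u ++ [false]) := by rw [hct] at h1; linarith
      simp [bitf, this]

lemma preimage_cyl (hL : Good L) (h1 : L [] = 1) (u : Word) :
    limf L ⁻¹' (cyl u) ∩ Set.Ico (0:ℝ) 1 = Set.Ico (off u L) (off u L + L u) := by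
  ext t
  simp only [Set.mem_inter_iff, Set.mem_preimage, mem_cyl, Set.mem_Ico]
  rw [← wrd_eq_prefixSeq]
  constructor
  · rintro ⟨hw, ht0, ht1⟩
    have h := wrd_mem_Ico hL ht0 (by rw [h1]; exact ht1) u.length
    rw [hw] at h
    exact h
  · rintro ⟨ha, hb⟩
    have ht0 : 0 ≤ t := le_trans (off_nonneg u L hL.1) ha
    have hle := off_add_le u L hL
    have ht1 : t < 1 := by rw [← h1]; linarith
    exact ⟨wrd_eq_of_mem hL ht0 (by rw [h1]; exact ht1) u ha hb, ht0, ht1⟩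

lemma measurableSet_bitf_fiber (L : Word → ℝ) (u : Word) (b : Bool) :
    MeasurableSet {t : ℝ | bitf L t u = b} := by
  cases b
  · have : {t : ℝ | bitf L t u = false} = Set.Iio (off u L + L (u ++ [false])) := by
      ext t
      simp only [Set.mem_setOf_eq, Set.mem_Iio, bitf]
      split <;> simp_all
    rw [this]; exact measurableSet_Iio
  · have : {t : ℝ | bitf L t u = true} = Set.Ici (off u L + L (u ++ [false])) := by
      ext t
      simp only [Set.mem_setOf_eq, Set.mem_Ici, bitf]
      split <;> simp_all [le_of_not_gt, not_le.2]
    rw [this]; exact measurableSet_Ici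

lemma measurableSet_wrd_fiber (L : Word → ℝ) : ∀ (n : ℕ) (u : Word),
    MeasurableSet {t : ℝ | wrd L t n = u} := by
  intro n
  induction n with
  | zero =>
    intro u
    by_cases h : u = ([] : Word)
    · have : {t : ℝ | wrd L t 0 = u} = Set.univ := by ext t; simp [wrd, h]
      rw [this]; exact MeasurableSet.univ
    · have : {t : ℝ | wrd L t 0 = u} = ∅ := by
        ext t; simp only [Set.mem_setOf_eq, Set.mem_empty_iff_false, iff_false, wrd]
        exact fun hh => h hh.symm
      rw [this]; exact MeasurableSet.empty
  | succ n ih =>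
    intro u
    rcases List.eq_nil_or_concat u with rfl | ⟨u', b, rfl⟩
    · have : {t : ℝ | wrd L t (n+1) = []} = ∅ := by
        ext t; simp [wrd]
      rw [this]; exact MeasurableSet.empty
    · rw [List.concat_eq_append]
      have : {t : ℝ | wrd L t (n+1) = u' ++ [b]} =
          {t | wrd L t n = u'} ∩ {t | bitf L t u' = b} := by
        ext t
        simp only [Set.mem_inter_iff, Set.mem_setOf_eq, wrd]
        constructor
        · intro h
          obtain ⟨ha, hb⟩ := List.append_inj' h rfl
          refine ⟨ha, ?_⟩
          rw [ha] at hb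
          injection hb
        · rintro ⟨ha, hb⟩
          rw [ha, hb]
      rw [this]
      exact (ih u').inter (measurableSet_bitf_fiber L u' b)

lemma measurable_limf (L : Word → ℝ) : Measurable (limf L) := by
  apply measurable_pi_lambda
  intro n
  apply measurable_to_countable'
  intro b
  have : (fun t => limf L t n) ⁻¹' {b} =
      ⋃ u : Word, ({t : ℝ | wrd L t n = u} ∩ {t | bitf L t u = b}) := by
    ext t
    simp only [Set.mem_preimage, Set.mem_singleton_iff, Set.mem_iUnion, Set.mem_inter_iff,
      Set.mem_setOf_eq, limf]
    constructor
    · intro h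
      exact ⟨wrd L t n, rfl, h⟩
    · rintro ⟨u, hu, hb⟩
      rw [hu]; exact hb
  rw [this]
  exact MeasurableSet.iUnion fun u =>
    (measurableSet_wrd_fiber L n u).inter (measurableSet_bitf_fiber L u b)

noncomputable def limμ (L : Word → ℝ) : Measure BSeq :=
  (volume.restrict (Set.Ico (0:ℝ) 1)).map (limf L)

lemma limμ_cyl (hL : Good L) (h1 : L [] = 1) (u : Word) :
    limμ L (cyl u) = ENNReal.ofReal (L u) := by
  rw [limμ, Measure.map_apply (measurable_limf L) (measurableSet_cyl u),
    Measure.restrict_apply (measurable_limf L (measurableSet_cyl u)),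
    preimage_cyl hL h1 u, Real.volume_Ico]
  congr 1
  ring

lemma limμ_prob (hL : Good L) (h1 : L [] = 1) : IsProbabilityMeasure (limμ L) := by
  constructor
  have := limμ_cyl hL h1 ([] : Word)
  rw [cyl_nil] at this
  rw [this, h1]
  simp

end Construction


section Weak

/-- The indicator of a cylinder as a bounded continuous function. -/
noncomputable def indBCF (u : Word) : BoundedContinuousFunction BSeq ℝ := by
  refine BoundedContinuousFunction.ofNormedAddCommGroup
    ((cyl u).indicator (fun _ => (1:ℝ))) ?_ 1 ?_
  · have hcont : Continuous (cyl u).boolIndicator :=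
      (continuous_boolIndicator_iff_isClopen _).2 (isClopen_cyl u)
    have heq : (cyl u).indicator (fun _ => (1:ℝ)) =
        (fun b : Bool => if b then (1:ℝ) else 0) ∘ (cyl u).boolIndicator := by
      funext v
      by_cases h : v ∈ cyl u
      · simp [Set.indicator_of_mem h, Set.boolIndicator, h]
      · simp [Set.indicator_of_notMem h, Set.boolIndicator, h]
    rw [heq]
    exact (continuous_of_discreteTopology).comp hcont
  · intro v
    by_cases h : v ∈ cyl u
    · simp [Set.indicator_of_mem h]
    · simp [Set.indicator_of_notMem h]

lemma integral_indBCF (μ : Measure BSeq) (u : Word) :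
    ∫ v, indBCF u v ∂μ = (μ (cyl u)).toReal := by
  have heq : ∀ v, indBCF u v = Set.indicator (cyl u) (fun _ => (1:ℝ)) v := fun v => rfl
  rw [integral_congr_ae (Filter.Eventually.of_forall heq),
    integral_indicator_const _ (measurableSet_cyl u)]
  simp [measureReal_def]

lemma prefixSeq_eq_iff {v w : BSeq} {k : ℕ} :
    prefixSeq v k = prefixSeq w k ↔ ∀ i < k, v i = w i := by
  rw [prefixSeq, prefixSeq, List.ofFn_inj]
  constructor
  · intro h i hi
    exact congrFun h ⟨i, hi⟩
  · intro h
    funext i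
    exact h i i.2

lemma self_mem_cyl (v : BSeq) (k : ℕ) : v ∈ cyl (prefixSeq v k) := by
  rw [mem_cyl, prefixSeq_length]

lemma exists_prefix_approx (f : BoundedContinuousFunction BSeq ℝ) {ε : ℝ} (hε : 0 < ε) :
    ∃ k : ℕ, ∀ v w : BSeq, prefixSeq v k = prefixSeq w k → |f v - f w| ≤ ε := by
  have key : ∀ v : BSeq, ∃ k : ℕ, ∀ w, prefixSeq w k = prefixSeq v k → |f w - f v| < ε/2 := by
    intro v
    have hopen : IsOpen (f ⁻¹' Metric.ball (f v) (ε/2)) :=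
      f.continuous.isOpen_preimage _ Metric.isOpen_ball
    rw [isOpen_pi_iff] at hopen
    obtain ⟨I, U, hIU, hsub⟩ := hopen v (by
      simp only [Set.mem_preimage]
      exact Metric.mem_ball_self (by linarith))
    refine ⟨(I.sup id) + 1, fun w hw => ?_⟩
    have hcoord := prefixSeq_eq_iff.1 hw
    have hmem : w ∈ Set.pi (I : Set ℕ) U := by
      intro i hi
      rw [hcoord i (Nat.lt_succ_of_le (Finset.le_sup (f := id) hi))]
      exact (hIU i hi).2
    have := hsub hmem
    simpa [Real.dist_eq] using this
  choose k hk using key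
  obtain ⟨T, hT⟩ := isCompact_univ.elim_finite_subcover
    (fun v : BSeq => cyl (prefixSeq v (k v))) (fun v => (isClopen_cyl _).2)
    (fun v _ => Set.mem_iUnion.2 ⟨v, self_mem_cyl v (k v)⟩)
  refine ⟨T.sup k, fun v w hvw => ?_⟩
  obtain ⟨c, hcT, hvc⟩ : ∃ c ∈ T, v ∈ cyl (prefixSeq c (k c)) := by
    have := hT (Set.mem_univ v)
    simpa using this
  have hkc : k c ≤ T.sup k := Finset.le_sup hcT
  have hvc' : prefixSeq v (k c) = prefixSeq c (k c) := by
    have := (mem_cyl.1 hvc)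
    rwa [prefixSeq_length] at this
  have hwc' : prefixSeq w (k c) = prefixSeq c (k c) := by
    rw [← hvc', prefixSeq_eq_iff]
    intro i hi
    exact (prefixSeq_eq_iff.1 hvw i (lt_of_lt_of_le hi hkc)).symm
  have h1 := hk c v hvc'
  have h2 := hk c w hwc'
  calc |f v - f w| ≤ |f v - f c| + |f c - f w| := abs_sub_le _ _ _
    _ ≤ ε := by
        rw [abs_sub_comm] at h2
        linarith

noncomputable def extSeq (u : Word) : BSeq := fun i => u.getD i false

lemma prefixSeq_extSeq (u : Word) : prefixSeq (extSeq u) u.length = u := by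
  apply List.ext_getElem
  · simp [prefixSeq_length]
  · intro i h1 h2
    simp [prefixSeq, extSeq, List.getD_eq_getElem?_getD, List.getElem?_eq_getElem h2]

/-- The cylinder-approximation of `f` at depth `k`. -/
noncomputable def cylApprox (f : BoundedContinuousFunction BSeq ℝ) (k : ℕ) (v : BSeq) : ℝ :=
  ∑ b : Fin k → Bool,
    Set.indicator (cyl (List.ofFn b)) (fun _ => f (extSeq (List.ofFn b))) v

lemma cylApprox_eq (f : BoundedContinuousFunction BSeq ℝ) (k : ℕ) (v : BSeq) :
    cylApprox f k v = f (extSeq (prefixSeq v k)) := by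
  rw [cylApprox]
  rw [Finset.sum_eq_single (fun i : Fin k => v i)]
  · rw [Set.indicator_of_mem]
    · rfl
    · exact self_mem_cyl v k
  · intro b _ hb
    rw [Set.indicator_of_notMem]
    intro hmem
    apply hb
    rw [mem_cyl, List.length_ofFn, prefixSeq] at hmem
    exact (List.ofFn_inj.1 hmem).symm
  · intro h
    exact absurd (Finset.mem_univ _) h

lemma integrable_cylApprox (f : BoundedContinuousFunction BSeq ℝ) (k : ℕ)
    (μ : Measure BSeq) [IsFiniteMeasure μ] : Integrable (cylApprox f k) μ := by
  apply integrable_finset_sum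
  intro b _
  exact (integrable_const _).indicator (measurableSet_cyl _)

lemma integral_cylApprox (f : BoundedContinuousFunction BSeq ℝ) (k : ℕ)
    (μ : Measure BSeq) [IsFiniteMeasure μ] :
    ∫ v, cylApprox f k v ∂μ =
      ∑ b : Fin k → Bool, f (extSeq (List.ofFn b)) * (μ (cyl (List.ofFn b))).toReal := by
  simp only [cylApprox]
  rw [integral_finset_sum]
  · refine Finset.sum_congr rfl fun b _ => ?_
    rw [integral_indicator_const _ (measurableSet_cyl _), smul_eq_mul, mul_comm, measureReal_def]
  · intro b _
    exact (integrable_const _).indicator (measurableSet_cyl _)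

lemma abs_cylApprox_sub (f : BoundedContinuousFunction BSeq ℝ) {ε : ℝ} {k : ℕ}
    (hk : ∀ v w : BSeq, prefixSeq v k = prefixSeq w k → |f v - f w| ≤ ε) (v : BSeq) :
    |f v - cylApprox f k v| ≤ ε := by
  rw [cylApprox_eq]
  apply hk
  have h := prefixSeq_extSeq (prefixSeq v k)
  rw [prefixSeq_length] at h
  exact h.symm

lemma weakTendsto_of_cylinders {μs : ℕ → Measure BSeq} (hprob : ∀ n, IsProbabilityMeasure (μs n))
    {μ : Measure BSeq} (hμ : IsProbabilityMeasure μ)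
    (hcyl : ∀ u : Word, Tendsto (fun n => ((μs n) (cyl u)).toReal) atTop
      (𝓝 ((μ (cyl u)).toReal))) :
    WeakTendsto μs μ := by
  intro f
  rw [Metric.tendsto_atTop]
  intro ε hε
  obtain ⟨k, hk⟩ := exists_prefix_approx f (show 0 < ε/4 by linarith)
  have hbound : ∀ (μ' : Measure BSeq), IsProbabilityMeasure μ' →
      |∫ v, f v ∂μ' - ∫ v, cylApprox f k v ∂μ'| ≤ ε/4 := by
    intro μ' hμ'
    haveI := hμ'
    rw [← integral_sub (f.integrable μ') (integrable_cylApprox f k μ')]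
    have : ‖∫ v, (f v - cylApprox f k v) ∂μ'‖ ≤ (ε/4) * (μ' Set.univ).toReal := by
      apply norm_integral_le_of_norm_le_const
      apply Filter.Eventually.of_forall
      intro v
      rw [Real.norm_eq_abs]
      exact abs_cylApprox_sub f hk v
    rw [Real.norm_eq_abs] at this
    simpa using this
  have hconv : Tendsto (fun n => ∫ v, cylApprox f k v ∂(μs n)) atTop
      (𝓝 (∫ v, cylApprox f k v ∂μ)) := by
    haveI := hμ
    haveI := hprob
    rw [integral_cylApprox f k μ]
    have : ∀ n, ∫ v, cylApprox f k v ∂(μs n) =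
        ∑ b : Fin k → Bool, f (extSeq (List.ofFn b)) * ((μs n) (cyl (List.ofFn b))).toReal :=
      fun n => by haveI := hprob n; exact integral_cylApprox f k (μs n)
    simp only [this]
    apply tendsto_finset_sum
    intro b _
    exact (hcyl (List.ofFn b)).const_mul _
  rw [Metric.tendsto_atTop] at hconv
  obtain ⟨N, hN⟩ := hconv (ε/4) (by linarith)
  refine ⟨N, fun n hn => ?_⟩
  have h1 := hbound (μs n) (hprob n)
  have h2 := hN n hn
  have h3 := hbound μ hμ
  rw [Real.dist_eq] at h2 ⊢
  calc |∫ v, f v ∂(μs n) - ∫ v, f v ∂μ|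
      ≤ |∫ v, f v ∂(μs n) - ∫ v, cylApprox f k v ∂(μs n)| +
        |∫ v, cylApprox f k v ∂(μs n) - ∫ v, cylApprox f k v ∂μ| +
        |∫ v, cylApprox f k v ∂μ - ∫ v, f v ∂μ| := by
        have := abs_sub_le (∫ v, f v ∂(μs n)) (∫ v, cylApprox f k v ∂μ) (∫ v, f v ∂μ)
        have := abs_sub_le (∫ v, f v ∂(μs n)) (∫ v, cylApprox f k v ∂(μs n))
          (∫ v, cylApprox f k v ∂μ)
        linarith
    _ < ε := by
        rw [abs_sub_comm] at h3
        linarith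

end Weak


/-- For binary trees `x_n` with `|x_n| → ∞`, subtree size convergence holds iff the
associated measures `μ_{x_n} = (1/(|x_n|+1)) Σ_{v ∈ ∂x_n} unif(B_v)` converge weakly;
and then the limits agree: if `μ` is the weak limit then `t(x_n,u) → μ(B_u)`. -/
theorem stmt6 (x : ℕ → Finset Word) (htree : ∀ n, IsBinTree (x n))
    (hcard : Tendsto (fun n => (x n).card) atTop atTop)
    (ν : Word → Measure BSeq) (hν : IsUnifCylFamily ν) :
    ((∀ u : Word, ∃ L : ℝ, Tendsto (fun n => stf (x n) u) atTop (𝓝 L)) ↔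
      ∃ μ : Measure BSeq, IsProbabilityMeasure μ ∧
        WeakTendsto (fun n => treeMeasure ν (x n)) μ) ∧
    ∀ μ : Measure BSeq, IsProbabilityMeasure μ →
      WeakTendsto (fun n => treeMeasure ν (x n)) μ →
      ∀ u : Word, Tendsto (fun n => stf (x n) u) atTop (𝓝 ((μ (cyl u)).toReal)) := by
  have hP : ∀ n, IsProbabilityMeasure (treeMeasure ν (x n)) :=
    fun n => treeMeasure_prob hν (htree n)
  have hdiff : ∀ u : Word,
      Tendsto (fun n => (treeMeasure ν (x n) (cyl u)).toReal - stf (x n) u) atTop (𝓝 0) := by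
    intro u
    have h2 : Tendsto (fun n => ((x n).card : ℝ)) atTop atTop :=
      tendsto_natCast_atTop_atTop.comp hcard
    have hb : Tendsto (fun n => 2 / ((x n).card : ℝ)) atTop (𝓝 0) :=
      Tendsto.div_atTop tendsto_const_nhds h2
    refine squeeze_zero_norm' ?_ hb
    filter_upwards [hcard.eventually_ge_atTop 1] with n hn
    rw [Real.norm_eq_abs]
    exact abs_treeMeasure_sub_stf hν (htree n) hn u
  have hpart2 : ∀ μ : Measure BSeq, IsProbabilityMeasure μ →
      WeakTendsto (fun n => treeMeasure ν (x n)) μ →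
      ∀ u : Word, Tendsto (fun n => stf (x n) u) atTop (𝓝 ((μ (cyl u)).toReal)) := by
    intro μ hμ hw u
    have h1 : Tendsto (fun n => (treeMeasure ν (x n) (cyl u)).toReal) atTop
        (𝓝 ((μ (cyl u)).toReal)) := by
      have := hw (indBCF u)
      simpa only [integral_indBCF] using this
    have h2 := h1.sub (hdiff u)
    rw [sub_zero] at h2
    have heq : (fun n => (treeMeasure ν (x n) (cyl u)).toReal -
        ((treeMeasure ν (x n) (cyl u)).toReal - stf (x n) u)) = fun n => stf (x n) u := by
      funext n; ring
    rwa [heq] at h2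
  refine ⟨⟨?_, ?_⟩, hpart2⟩
  · intro h
    choose Lf hLf using h
    have hm : ∀ u, Tendsto (fun n => (treeMeasure ν (x n) (cyl u)).toReal) atTop (𝓝 (Lf u)) := by
      intro u
      have h2 := (hLf u).add (hdiff u)
      rw [add_zero] at h2
      have heq : (fun n => stf (x n) u +
          ((treeMeasure ν (x n) (cyl u)).toReal - stf (x n) u)) =
          fun n => (treeMeasure ν (x n) (cyl u)).toReal := by
        funext n; ring
      rwa [heq] at h2
    have hGood : Good Lf := by
      constructor
      · intro u
        exact ge_of_tendsto' (hm u) fun n => ENNReal.toReal_nonneg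
      · intro u
        have hsplit : ∀ n, (treeMeasure ν (x n) (cyl u)).toReal =
            (treeMeasure ν (x n) (cyl (u ++ [false]))).toReal +
            (treeMeasure ν (x n) (cyl (u ++ [true]))).toReal := by
          intro n
          haveI := hP n
          rw [← ENNReal.toReal_add (measure_ne_top _ _) (measure_ne_top _ _)]
          congr 1
          rw [cyl_eq_union u]
          exact measure_union (disjoint_cyl u) (measurableSet_cyl _)
        have h2 := (hm (u ++ [false])).add (hm (u ++ [true]))
        refine tendsto_nhds_unique (hm u) ?_
        simpa only [← hsplit] using h2
    have hL1 : Lf [] = 1 := by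
      have hconst : ∀ n, (treeMeasure ν (x n) (cyl ([] : Word))).toReal = 1 := by
        intro n
        haveI := hP n
        rw [cyl_nil, measure_univ]
        simp
      exact tendsto_nhds_unique (hm ([] : Word))
        (tendsto_const_nhds.congr fun n => (hconst n).symm)
    refine ⟨limμ Lf, limμ_prob hGood hL1, ?_⟩
    apply weakTendsto_of_cylinders hP (limμ_prob hGood hL1)
    intro u
    rw [limμ_cyl hGood hL1 u, ENNReal.toReal_ofReal (hGood.1 u)]
    exact hm u
  · rintro ⟨μ, hμ, hw⟩ u
    exact ⟨_, hpart2 μ hμ hw u⟩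

end DMTCS
end
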